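/- Let σ ⊆ ℝ^d be a d-dimensional convex polytope and let ξ ⊆ ℝ^d be an affine subspace of codimension 2. Then at most two facets of σ have affine span containing ξ. -/

import Mathlib

open Set Module

section NS
variable {E : Type*} [NormedAddCommGroup E] [NormedSpace ℝ E] [FiniteDimensional ℝ E]

/-- If `F` is extreme in `σ`, convex and nonempty, then every point of `σ` that lies in the
affine span of `F` actually lies in `F`. -/
lemma mem_of_extreme_of_mem_affineSpan {σ F : Set E} (hF : IsExtreme ℝ σ F) (hFc : Convex ℝ F)
    (hFne : F.Nonempty) {c : E} (hcσ : c ∈ σ) (hcH : c ∈ affineSpan ℝ F) : c ∈ F := by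
  obtain ⟨x, hx⟩ := hFne.intrinsicInterior hFc
  rw [mem_intrinsicInterior] at hx
  obtain ⟨y, hy, rfl⟩ := hx
  have hxF : (y : E) ∈ F := Set.mem_preimage.mp (interior_subset hy)
  -- the path t ↦ c + t • (y - c) inside the affine span of F
  have hmemH : ∀ t : ℝ, t • ((y : E) - c) + c ∈ affineSpan ℝ F := fun t =>
    AffineSubspace.smul_vsub_vadd_mem _ t y.2 hcH hcH
  set γ : ℝ → affineSpan ℝ F := fun t => ⟨t • ((y : E) - c) + c, hmemH t⟩ with hγ
  have hcont : Continuous γ := by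
    apply Continuous.subtype_mk
    exact (continuous_id.smul continuous_const).add continuous_const
  have hγ1 : γ 1 = y := by
    apply Subtype.ext
    simp [hγ]
  have hnhds : (interior ((↑) ⁻¹' F : Set <| affineSpan ℝ F)) ∈ nhds (γ 1) := by
    rw [hγ1]
    exact isOpen_interior.mem_nhds hy
  have hpre := (hcont.continuousAt (x := (1:ℝ))).preimage_mem_nhds hnhds
  rw [Metric.mem_nhds_iff] at hpre
  obtain ⟨ε, hε, hball⟩ := hpre
  set s : ℝ := min ε 1 / 2 with hs
  have hs0 : 0 < s := by positivity
  have hmem : (1 + s) ∈ Metric.ball (1:ℝ) ε := by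
    simp only [Metric.mem_ball, dist_eq_norm]
    rw [show (1:ℝ) + s - 1 = s by ring, Real.norm_eq_abs, abs_of_pos hs0]
    rcases le_total ε 1 with h | h
    · calc s = min ε 1 / 2 := hs
        _ ≤ ε / 2 := by gcongr; exact min_le_left _ _
        _ < ε := by linarith
    · calc s ≤ 1 / 2 := by rw [hs]; gcongr; exact min_le_right _ _
        _ < ε := by linarith
  have h2 : γ (1 + s) ∈ interior ((↑) ⁻¹' F : Set <| affineSpan ℝ F) := hball hmem
  have h3 := interior_subset h2
  have hmF : (1 + s) • ((y : E) - c) + c ∈ F := h3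
  set m : E := (1 + s) • ((y : E) - c) + c with hm
  have hmσ : m ∈ σ := hF.1 hmF
  -- y is in the open segment between c and m
  have hseg : (y : E) ∈ openSegment ℝ c m := by
    refine ⟨s / (1 + s), 1 / (1 + s), by positivity, by positivity, ?_, ?_⟩
    · field_simp; ring
    · rw [hm]
      have h1s : (1:ℝ) + s ≠ 0 := by positivity
      match_scalars <;> field_simp <;> ring
  exact hF.2 hcσ hmσ hxF hseg

/-- A convex extreme set whose affine span is the kernel-hyperplane of `x ↦ f (x - p)`
forces `σ` to lie in one of the two closed half-spaces. -/
lemma halfspace_of_extreme {σ F : Set E} (hσconv : Convex ℝ σ) (hF : IsExtreme ℝ σ F)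
    (hFc : Convex ℝ F) (hFne : F.Nonempty) (f : E →ₗ[ℝ] ℝ) {p : E}
    (hker : ∀ x : E, f (x - p) = 0 ↔ x ∈ affineSpan ℝ F) :
    (∀ x ∈ σ, 0 ≤ f (x - p)) ∨ (∀ x ∈ σ, f (x - p) ≤ 0) := by
  by_contra h
  push_neg at h
  obtain ⟨⟨a, haσ, ha⟩, ⟨b, hbσ, hb⟩⟩ := h
  -- ha : f (a - p) < 0, hb : 0 < f (b - p)
  set fa : ℝ := f (b - p) with hfa
  set fb : ℝ := f (a - p) with hfb
  -- rename: b has positive value, a negative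
  set t : ℝ := fa / (fa - fb) with ht
  have hfafb : 0 < fa - fb := by linarith
  have ht0 : 0 < t := by positivity
  have ht1 : t < 1 := by
    rw [ht, div_lt_one hfafb]; linarith
  set c : E := (1 - t) • b + t • a with hc
  have hcσ : c ∈ σ := hσconv hbσ haσ (by linarith) (le_of_lt ht0) (by ring)
  have hcf : f (c - p) = 0 := by
    have hcp : c - p = (1 - t) • (b - p) + t • (a - p) := by
      rw [hc]; module
    rw [hcp, map_add, map_smul, map_smul, smul_eq_mul, smul_eq_mul, ← hfa, ← hfb, ht]
    field_simp
    ring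
  have hcF : c ∈ F :=
    mem_of_extreme_of_mem_affineSpan hF hFc hFne hcσ ((hker c).mp hcf)
  have hseg : c ∈ openSegment ℝ b a :=
    ⟨1 - t, t, by linarith, ht0, by ring, rfl⟩
  have hbF : b ∈ F := hF.2 hbσ haσ hcF hseg
  have : f (b - p) = 0 := (hker b).mpr (subset_affineSpan ℝ F hbF)
  rw [← hfa] at this
  linarith

end NS

section InnerLemma
variable {E : Type*} [NormedAddCommGroup E] [InnerProductSpace ℝ E] [FiniteDimensional ℝ E]

lemma exists_functional_of_hyperplane (H : AffineSubspace ℝ E) {p : E} (hp : p ∈ H)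
    (hcodim : finrank ℝ H.direction + 1 = finrank ℝ E) :
    ∃ f : E →ₗ[ℝ] ℝ, ∀ x : E, f (x - p) = 0 ↔ x ∈ H := by
  set D := H.direction with hD
  have horth : finrank ℝ Dᗮ = 1 := by
    have h1 := D.finrank_add_finrank_orthogonal
    omega
  have hDbot : Dᗮ ≠ ⊥ := by
    intro h
    rw [h, finrank_bot] at horth
    omega
  obtain ⟨n, hn, hn0⟩ := Submodule.exists_mem_ne_zero_of_ne_bot hDbot
  have hspan : (ℝ ∙ n) = Dᗮ := by
    apply Submodule.eq_of_le_of_finrank_eq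
    · rwa [Submodule.span_singleton_le_iff_mem]
    · rw [finrank_span_singleton hn0, horth]
  refine ⟨(innerSL ℝ n : E →L[ℝ] ℝ).toLinearMap, fun x => ?_⟩
  constructor
  · intro hfx
    have hmem : x - p ∈ (ℝ ∙ n)ᗮ := by
      rw [Submodule.mem_orthogonal]
      intro u hu
      obtain ⟨c, rfl⟩ := Submodule.mem_span_singleton.mp hu
      have : inner ℝ n (x - p) = (0 : ℝ) := hfx
      rw [real_inner_smul_left, this, mul_zero]
    rw [hspan, Submodule.orthogonal_orthogonal] at hmem
    have := AffineSubspace.vadd_mem_of_mem_direction (hD ▸ hmem) hp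
    simpa [sub_add_cancel] using this
  · intro hx
    have hmem : x - p ∈ D := AffineSubspace.vsub_mem_direction hx hp
    have := (Submodule.mem_orthogonal _ n).mp hn (x - p) hmem
    simpa [real_inner_comm] using this


lemma three_facets_aux {d : ℕ} (hd : 2 ≤ d) (hdim : finrank ℝ E = d)
    {σ : Set E} (hσconv : Convex ℝ σ)
    {ξ : AffineSubspace ℝ E} {p : E} (hp : p ∈ ξ)
    (hξ : finrank ℝ ξ.direction = d - 2)
    (G : Fin 3 → Set E)
    (hext : ∀ i, IsExtreme ℝ σ (G i)) (hconv : ∀ i, Convex ℝ (G i))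
    (hrank : ∀ i, finrank ℝ (affineSpan ℝ (G i)).direction = d - 1)
    (hle : ∀ i, ξ ≤ affineSpan ℝ (G i))
    (hGne : ∀ i j, i ≠ j → G i ≠ G j) : False := by
  classical
  set W : Submodule ℝ E := ξ.direction with hW
  set H : Fin 3 → AffineSubspace ℝ E := fun i => affineSpan ℝ (G i) with hH
  have hpH : ∀ i, p ∈ H i := fun i => hle i hp
  -- each G i is nonempty
  have hne : ∀ i, (G i).Nonempty := by
    intro i
    rcases (G i).eq_empty_or_nonempty with h | h
    · exfalso
      have := hrank i
      rw [h, AffineSubspace.span_empty, AffineSubspace.direction_bot, finrank_bot] at this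
      omega
    · exact h
  -- choose q i ∈ G i  with  q i - p ∉ W
  have hq : ∀ i, ∃ q ∈ G i, q - p ∉ W := by
    intro i
    by_contra h
    push_neg at h
    have hsub : G i ⊆ (AffineSubspace.mk' p W : Set E) := by
      intro x hx
      have := AffineSubspace.vadd_mem_mk' p (h x hx)
      simpa [sub_add_cancel] using this
    have hle2 : affineSpan ℝ (G i) ≤ AffineSubspace.mk' p W := affineSpan_le.mpr hsub
    have hdir := AffineSubspace.direction_le hle2
    rw [AffineSubspace.direction_mk'] at hdir
    have := Submodule.finrank_mono hdir
    rw [hrank i, hξ] at this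
    omega
  choose q hqG hqW using hq
  -- functionals vanishing on H i, nonnegative on σ
  have hf : ∀ i, ∃ f : E →ₗ[ℝ] ℝ, (∀ x : E, f (x - p) = 0 ↔ x ∈ H i) ∧ ∀ x ∈ σ, 0 ≤ f (x - p) := by
    intro i
    have hri : finrank ℝ (H i).direction = d - 1 := hrank i
    obtain ⟨f, hker⟩ := exists_functional_of_hyperplane (H i) (hpH i)
      (by rw [hri, hdim]; omega)
    rcases halfspace_of_extreme hσconv (hext i) (hconv i) (hne i) f hker with h | h
    · exact ⟨f, hker, h⟩
    · refine ⟨-f, fun x => ?_, fun x hx => ?_⟩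
      · rw [LinearMap.neg_apply, neg_eq_zero]; exact hker x
      · rw [LinearMap.neg_apply]; linarith [h x hx]
  choose f hker hf0 using hf
  -- the hyperplanes are pairwise distinct
  have hHne : ∀ i j, i ≠ j → H i ≠ H j := by
    intro i j hij heq
    apply hGne i j hij
    have key : ∀ k l : Fin 3, H k = H l → G k ⊆ G l := by
      intro k l hkl x hx
      have hkl' : affineSpan ℝ (G k) = affineSpan ℝ (G l) := hkl
      exact mem_of_extreme_of_mem_affineSpan (hext l) (hconv l) (hne l) ((hext k).1 hx)
        (hkl' ▸ subset_affineSpan ℝ _ hx)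
    exact subset_antisymm (key i j heq) (key j i heq.symm)
  -- intersection of directions is W
  have hrank' : ∀ i, finrank ℝ (H i).direction = d - 1 := hrank
  have hinf : ∀ i j, i ≠ j → (H i).direction ⊓ (H j).direction = W := by
    intro i j hij
    have hDne : (H i).direction ≠ (H j).direction := by
      intro h
      exact hHne i j hij (AffineSubspace.ext_of_direction_eq h ⟨p, hpH i, hpH j⟩)
    have hlt : (H i).direction < (H i).direction ⊔ (H j).direction := by
      rcases lt_or_eq_of_le (le_sup_left : (H i).direction ≤ _) with h | h
      · exact h
      · exfalso
        apply hDne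
        exact (Submodule.eq_of_le_of_finrank_eq (h ▸ le_sup_right)
          (by rw [hrank' j, hrank' i])).symm
    have hsup_le : finrank ℝ ((H i).direction ⊔ (H j).direction : Submodule ℝ E) ≤ d := by
      rw [← hdim]; exact Submodule.finrank_le _
    have hsup_lt := Submodule.finrank_lt_finrank_of_lt hlt
    have heq := Submodule.finrank_sup_add_finrank_inf_eq (H i).direction (H j).direction
    rw [hrank' i] at hsup_lt
    rw [hrank' i, hrank' j] at heq
    have hWle : W ≤ (H i).direction ⊓ (H j).direction :=
      le_inf (AffineSubspace.direction_le (hle i)) (AffineSubspace.direction_le (hle j))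
    exact (Submodule.eq_of_le_of_finrank_eq hWle (by rw [hξ]; omega)).symm
  -- strict positivity off the diagonal, vanishing on it
  have hdiag : ∀ i, f i (q i - p) = 0 :=
    fun i => (hker i _).mpr (subset_affineSpan ℝ _ (hqG i))
  have hpos : ∀ i j, i ≠ j → 0 < f i (q j - p) := by
    intro i j hij
    rcases lt_or_eq_of_le (hf0 i (q j) ((hext j).1 (hqG j))) with h | h
    · exact h
    · exfalso
      apply hqW j
      have hqHi : q j ∈ H i := (hker i _).mp h.symm
      have h1 : q j - p ∈ (H i).direction := AffineSubspace.vsub_mem_direction hqHi (hpH i)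
      have h2 : q j - p ∈ (H j).direction :=
        AffineSubspace.vsub_mem_direction (subset_affineSpan ℝ _ (hqG j)) (hpH j)
      have := Submodule.mem_inf.mpr ⟨h1, h2⟩
      rwa [hinf i j hij] at this
  -- f i vanish on W
  have hfW : ∀ i, ∀ w ∈ W, f i w = 0 := by
    intro i w hw
    have hwD : w ∈ (H i).direction := by
      have : W ≤ (H i).direction := AffineSubspace.direction_le (hle i)
      exact this hw
    have hmem : w + p ∈ H i := by
      have := AffineSubspace.vadd_mem_of_mem_direction hwD (hpH i)
      simpa using this
    have := (hker i (w + p)).mpr hmem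
    simpa using this
  -- linear dependence modulo W
  have hQ : finrank ℝ (E ⧸ W) = 2 := by
    have := W.finrank_quotient_add_finrank
    rw [hξ, hdim] at this
    omega
  have hdep : ¬ LinearIndependent ℝ (fun i : Fin 3 => W.mkQ (q i - p)) := by
    intro h
    have := h.fintype_card_le_finrank
    rw [hQ, Fintype.card_fin] at this
    omega
  obtain ⟨g, hsum, i0, hi0⟩ := Fintype.not_linearIndependent_iff.mp hdep
  have hwmem : (∑ i, g i • (q i - p)) ∈ W := by
    rw [← Submodule.Quotient.mk_eq_zero]
    have : W.mkQ (∑ i, g i • (q i - p)) = ∑ i, g i • W.mkQ (q i - p) := by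
      rw [map_sum]; simp
    rw [← W.mkQ_apply]
    rw [this, hsum]
  have heqs : ∀ k, ∑ i, g i * f k (q i - p) = 0 := by
    intro k
    have := hfW k _ hwmem
    rw [map_sum] at this
    simpa [smul_eq_mul] using this
  -- final sign chase
  have e0 := heqs 0
  have e1 := heqs 1
  have e2 := heqs 2
  rw [Fin.sum_univ_three] at e0 e1 e2
  rw [hdiag 0] at e0
  rw [hdiag 1] at e1
  rw [hdiag 2] at e2
  have A01 := hpos 0 1 (by decide)
  have A02 := hpos 0 2 (by decide)
  have A10 := hpos 1 0 (by decide)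
  have A12 := hpos 1 2 (by decide)
  have A20 := hpos 2 0 (by decide)
  have A21 := hpos 2 1 (by decide)
  rcases lt_trichotomy (g 0) 0 with h | h | h
  · have hg2 : 0 < g 2 := by nlinarith
    have hg1 : 0 < g 1 := by nlinarith
    nlinarith
  · have hg2 : g 2 = 0 := by
      rw [h] at e1
      norm_num at e1
      exact e1.resolve_right (by rw [← map_sub]; exact A12.ne')
    have hg1 : g 1 = 0 := by
      rw [h, hg2] at e2
      norm_num at e2
      exact e2.resolve_right (by rw [← map_sub]; exact A21.ne')
    apply hi0
    fin_cases i0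
    · exact h
    · exact hg1
    · exact hg2
  · have hg2 : g 2 < 0 := by nlinarith
    have hg1 : g 1 < 0 := by nlinarith
    nlinarith

end InnerLemma

/-- Lemma 3.6: let `σ ⊆ ℝ^d` be a `d`-dimensional convex polytope (the convex hull
of a finite set, with full-dimensional affine span) and `ξ` an affine subspace of
codimension 2. Then at most two facets of `σ` (extreme convex subsets of dimension
`d − 1`) have affine span containing `ξ`. -/
theorem stmt_6 (d : ℕ) (hd : 2 ≤ d) (S : Finset (EuclideanSpace ℝ (Fin d)))
    (σ : Set (EuclideanSpace ℝ (Fin d))) (hσ : σ = convexHull ℝ (S : Set (EuclideanSpace ℝ (Fin d))))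
    (hfull : affineSpan ℝ σ = ⊤)
    (ξ : AffineSubspace ℝ (EuclideanSpace ℝ (Fin d))) (hξne : (ξ : Set (EuclideanSpace ℝ (Fin d))).Nonempty)
    (hξ : Module.finrank ℝ ξ.direction = d - 2) :
    {F : Set (EuclideanSpace ℝ (Fin d)) |
        IsExtreme ℝ σ F ∧ Convex ℝ F ∧
        Module.finrank ℝ (affineSpan ℝ F).direction = d - 1 ∧
        ξ ≤ affineSpan ℝ F}.encard ≤ 2 := by
  classical
  by_contra hcon
  push_neg at hcon
  have h3 := Order.add_one_le_of_lt hcon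
  norm_num at h3
  obtain ⟨T, hTsub, hT3⟩ := Set.exists_subset_encard_eq h3
  rw [Set.encard_eq_three] at hT3
  obtain ⟨F1, F2, F3, h12, h13, h23, rfl⟩ := hT3
  have m1 := hTsub (show F1 ∈ ({F1, F2, F3} : Set _) by simp)
  have m2 := hTsub (show F2 ∈ ({F1, F2, F3} : Set _) by simp)
  have m3 := hTsub (show F3 ∈ ({F1, F2, F3} : Set _) by simp)
  simp only [Set.mem_setOf_eq] at m1 m2 m3
  obtain ⟨p, hp⟩ := hξne
  have hσconv : Convex ℝ σ := hσ ▸ convex_convexHull ℝ _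
  have hdim : Module.finrank ℝ (EuclideanSpace ℝ (Fin d)) = d := finrank_euclideanSpace_fin
  refine three_facets_aux hd hdim hσconv hp hξ ![F1, F2, F3] ?_ ?_ ?_ ?_ ?_
  · intro i; fin_cases i
    exacts [m1.1, m2.1, m3.1]
  · intro i; fin_cases i
    exacts [m1.2.1, m2.2.1, m3.2.1]
  · intro i; fin_cases i
    exacts [m1.2.2.1, m2.2.2.1, m3.2.2.1]
  · intro i; fin_cases i
    exacts [m1.2.2.2, m2.2.2.2, m3.2.2.2]
  · intro i j hij
    fin_cases i <;> fin_cases j <;>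
      first
        | exact absurd rfl hij
        | exact h12 | exact h13 | exact h23
        | exact h12.symm | exact h13.symm | exact h23.symm
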